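/- arXiv:1511.04309 — 3 statements merged into one kernel-verified Lean document; each statement's English description precedes it below -/
import Mathlib

section
/- Let |ψ₁⟩ = cos(θ₁/2)|0⟩ + e^{iφ₁} sin(θ₁/2)|1⟩ with θ₁ ≠ π/2, let ρ = |ψ₁⟩⟨ψ₁| ⊗ |0⟩⟨0|, and let W_sync = R_n(α) ⊗ R_n(α) be any identical local rotation on both qubits that rotates the z-axis to a direction whose projection into the xy-plane is nonzero. Then the unitary U = W_sync C₁₂ achieves perfect quantum-phase synchronization: F(ρ, W_sync C₁₂) = 1. -/
open Matrix Complex Real Kronecker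
open scoped ComplexOrder

noncomputable section

/-- Pauli matrices -/
def pauliX : Matrix (Fin 2) (Fin 2) ℂ := !![0, 1; 1, 0]
def pauliY : Matrix (Fin 2) (Fin 2) ℂ := !![0, -Complex.I; Complex.I, 0]
def pauliZ : Matrix (Fin 2) (Fin 2) ℂ := !![1, 0; 0, -1]

/-- partial trace over the second qubit -/
def ptrace2 (ρ : Matrix (Fin 2 × Fin 2) (Fin 2 × Fin 2) ℂ) : Matrix (Fin 2) (Fin 2) ℂ :=
  fun i j => ∑ k : Fin 2, ρ (i, k) (j, k)

/-- partial trace over the first qubit -/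
def ptrace1 (ρ : Matrix (Fin 2 × Fin 2) (Fin 2 × Fin 2) ℂ) : Matrix (Fin 2) (Fin 2) ℂ :=
  fun i j => ∑ k : Fin 2, ρ (k, i) (k, j)

/-- Bloch vector of a single-qubit state -/
def bloch (τ : Matrix (Fin 2) (Fin 2) ℂ) : Fin 3 → ℝ :=
  ![(Matrix.trace (pauliX * τ)).re, (Matrix.trace (pauliY * τ)).re,
    (Matrix.trace (pauliZ * τ)).re]

/-- projection of the Bloch vector into the xy-plane -/
def mvec (τ : Matrix (Fin 2) (Fin 2) ℂ) : Fin 2 → ℝ :=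
  ![(Matrix.trace (pauliX * τ)).re, (Matrix.trace (pauliY * τ)).re]

def mdot (a b : Fin 2 → ℝ) : ℝ := a 0 * b 0 + a 1 * b 1
def mnorm (a : Fin 2 → ℝ) : ℝ := Real.sqrt (a 0 ^ 2 + a 1 ^ 2)

/-- quantum-phase fidelity between two single-qubit states -/
def phaseFid (τ₁ τ₂ : Matrix (Fin 2) (Fin 2) ℂ) : ℝ :=
  mdot (mvec τ₁) (mvec τ₂) / (mnorm (mvec τ₁) * mnorm (mvec τ₂))

/-- phase synchronization fidelity of a two-qubit state ρ under a unitary U -/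
def PSF (ρ U : Matrix (Fin 2 × Fin 2) (Fin 2 × Fin 2) ℂ) : ℝ :=
  phaseFid (ptrace2 (U * ρ * Uᴴ)) (ptrace1 (U * ρ * Uᴴ))

/-- pure qubit state |ψ(θ,φ)⟩ = cos(θ/2)|0⟩ + e^{iφ} sin(θ/2)|1⟩ -/
def ψ (θ φ : ℝ) : Fin 2 → ℂ :=
  ![(Real.cos (θ / 2) : ℂ), Complex.exp (Complex.I * φ) * (Real.sin (θ / 2) : ℂ)]

/-- density matrix |v⟩⟨v| of a vector -/
def dm (v : Fin 2 → ℂ) : Matrix (Fin 2) (Fin 2) ℂ := Matrix.vecMulVec v (star v)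

/-- CNOT with qubit 1 as control and qubit 2 as target -/
def CNOT12 : Matrix (Fin 2 × Fin 2) (Fin 2 × Fin 2) ℂ :=
  fun i j => if i.1 = j.1 ∧ i.2 = j.2 + j.1 then 1 else 0

/-- CNOT with qubit 2 as control and qubit 1 as target -/
def CNOT21 : Matrix (Fin 2 × Fin 2) (Fin 2 × Fin 2) ℂ :=
  fun i j => if i.1 = j.1 + j.2 ∧ i.2 = j.2 then 1 else 0

/-- R_y(β) = exp(−i(β/2)σ_y) -/
def Ry (β : ℝ) : Matrix (Fin 2) (Fin 2) ℂ :=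
  !![(Real.cos (β / 2) : ℂ), -(Real.sin (β / 2) : ℂ);
     (Real.sin (β / 2) : ℂ), (Real.cos (β / 2) : ℂ)]

/-- R_z(γ) = exp(−i(γ/2)σ_z) -/
def Rz (γ : ℝ) : Matrix (Fin 2) (Fin 2) ℂ :=
  !![Complex.exp (-(Complex.I * γ / 2)), 0; 0, Complex.exp (Complex.I * γ / 2)]

/-- rotation operator R_n̂(α) = exp(−i(α/2) n̂·σ) (closed form, n̂ a unit axis) -/
def Raxis (n : Fin 3 → ℝ) (α : ℝ) : Matrix (Fin 2) (Fin 2) ℂ :=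
  (Real.cos (α / 2) : ℂ) • (1 : Matrix (Fin 2) (Fin 2) ℂ) -
    (Complex.I * (Real.sin (α / 2) : ℂ)) •
      ((n 0 : ℂ) • pauliX + (n 1 : ℂ) • pauliY + (n 2 : ℂ) • pauliZ)

/-- the SO(3) rotation by angle α about the unit axis n̂ (Rodrigues formula) -/
def rot3 (n : Fin 3 → ℝ) (α : ℝ) (v : Fin 3 → ℝ) : Fin 3 → ℝ :=
  Real.cos α • v + Real.sin α • (crossProduct n v) +
    ((1 - Real.cos α) * (n ⬝ᵥ v)) • n

/-- the entangling circuit U_c(α,β,γ) -/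
def Uc (α β γ : ℝ) : Matrix (Fin 2 × Fin 2) (Fin 2 × Fin 2) ℂ :=
  CNOT21 * ((1 : Matrix (Fin 2) (Fin 2) ℂ) ⊗ₖ Ry β) * CNOT12 * (Rz γ ⊗ₖ Ry α) * CNOT21

/-- the general two-qubit circuit U_g -/
def Ug (α β γ μ₁ μ₂ ν₁ ν₂ σ₁ : ℝ) : Matrix (Fin 2 × Fin 2) (Fin 2 × Fin 2) ℂ :=
  ((Rz σ₁ * Ry ν₁ * Rz μ₁) ⊗ₖ (Ry ν₂ * Rz μ₂)) * Uc α β γ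


lemma calc_x2 (c s ca sa n0 n1 n2 E F : ℂ)
    (hn : n0^2 + n1^2 + n2^2 = 1) (hp : ca^2 + sa^2 = 1) (hE : E * F = 1) :
    (((ca - Complex.I*sa*n2)*(ca - Complex.I*sa*n2)*c + (-(Complex.I*sa*(n0 - Complex.I*n1)))*(-(Complex.I*sa*(n0 - Complex.I*n1)))*(E*s))*((Complex.I*sa*(n0 - Complex.I*n1))*(ca + Complex.I*sa*n2)*c + (ca - Complex.I*sa*n2)*(Complex.I*sa*(n0 + Complex.I*n1))*(F*s)) + ((ca - Complex.I*sa*n2)*(-(Complex.I*sa*(n0 + Complex.I*n1)))*c + (-(Complex.I*sa*(n0 - Complex.I*n1)))*(ca + Complex.I*sa*n2)*(E*s))*((Complex.I*sa*(n0 - Complex.I*n1))*(Complex.I*sa*(n0 - Complex.I*n1))*c + (ca - Complex.I*sa*n2)*(ca - Complex.I*sa*n2)*(F*s))) + (((-(Complex.I*sa*(n0 + Complex.I*n1)))*(ca - Complex.I*sa*n2)*c + (ca + Complex.I*sa*n2)*(-(Complex.I*sa*(n0 - Complex.I*n1)))*(E*s))*((ca + Complex.I*sa*n2)*(ca + Complex.I*sa*n2)*c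 + (Complex.I*sa*(n0 + Complex.I*n1))*(Complex.I*sa*(n0 + Complex.I*n1))*(F*s)) + ((-(Complex.I*sa*(n0 + Complex.I*n1)))*(-(Complex.I*sa*(n0 + Complex.I*n1)))*c + (ca + Complex.I*sa*n2)*(ca + Complex.I*sa*n2)*(E*s))*((ca + Complex.I*sa*n2)*(Complex.I*sa*(n0 - Complex.I*n1))*c + (Complex.I*sa*(n0 + Complex.I*n1))*(ca - Complex.I*sa*n2)*(F*s))) =
    (c^2 - s^2) * (2*sa*ca*n1 + 2*sa^2*n2*n0) := by
  linear_combination ((2 : ℂ)*s^2*sa^2*n0*n2 + (-2 : ℂ)*s^2*sa^2*n0*n1^2*n2*Complex.I^2 + (-2 : ℂ)*s^2*sa^4*n0*n2^3*E*F*Complex.I^2 + (2 : ℂ)*s^2*sa^4*n0*n1^2*n2*E*F*Complex.I^4 + (-2 : ℂ)*s^2*sa^4*n0^3*n2*E*F*Complex.I^2 + (2 : ℂ)*s^2*ca*sa*n1 + (-2 : ℂ)*s^2*ca*sa*n1^3*Complex.I^2 + (-2 : ℂ)*s^2*ca*sa^3*n1*n2^2*E*F*Complex.I^2 + (2 : ℂ)*s^2*ca*sa^3*n1^3*E*F*Complex.I^4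 + (-2 : ℂ)*s^2*ca*sa^3*n0^2*n1*E*F*Complex.I^2 + (-2 : ℂ)*s^2*ca^2*sa^2*n0*n2 + (2 : ℂ)*s^2*ca^2*sa^2*n0*n2*E*F + (2 : ℂ)*s^2*ca^2*sa^2*n0*n1^2*n2*Complex.I^2 + (-2 : ℂ)*s^2*ca^3*sa*n1 + (2 : ℂ)*s^2*ca^3*sa*n1*E*F + (2 : ℂ)*s^2*ca^3*sa*n1^3*Complex.I^2 + (-2 : ℂ)*c^2*sa^2*n0*n2 + (2 : ℂ)*c^2*sa^2*n0*n1^2*n2*Complex.I^2 + (2 : ℂ)*c^2*sa^4*n0*n2^3*Complex.I^2 + (-2 : ℂ)*c^2*sa^4*n0*n1^2*n2*Complex.I^4 + (2 : ℂ)*c^2*sa^4*n0^3*n2*Complex.I^2 + (-2 : ℂ)*c^2*ca*sa*n1 + (2 : ℂ)*c^2*ca*sa*n1^3*Complex.I^2 + (2 : ℂ)*c^2*ca*sa^3*n1*n2^2*Complex.I^2 + (-2 : ℂ)*c^2*ca*sa^3*n1^3*Complex.I^4 + (2 : ℂ)*c^2*ca*sa^3*n0^2*n1*Complex.I^2 +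 (-2 : ℂ)*c^2*ca^2*sa^2*n0*n1^2*n2*Complex.I^2 + (-2 : ℂ)*c^2*ca^3*sa*n1^3*Complex.I^2) * Complex.I_sq + ((2 : ℂ)*s^2*sa^4*n0*n2^3*Complex.I^2 + (-2 : ℂ)*s^2*sa^4*n0*n1^2*n2*Complex.I^4 + (2 : ℂ)*s^2*sa^4*n0^3*n2*Complex.I^2 + (2 : ℂ)*s^2*ca*sa^3*n1*n2^2*Complex.I^2 + (-2 : ℂ)*s^2*ca*sa^3*n1^3*Complex.I^4 + (2 : ℂ)*s^2*ca*sa^3*n0^2*n1*Complex.I^2 + (-2 : ℂ)*s^2*ca^2*sa^2*n0*n2 + (-2 : ℂ)*s^2*ca^3*sa*n1) * hE + ((2 : ℂ)*s^2*sa^2*n0*n2^3*Complex.I^2 + (-2 : ℂ)*s^2*sa^2*n0*n1^2*n2*Complex.I^4 + (2 : ℂ)*s^2*sa^2*n0^3*n2*Complex.I^2 + (2 : ℂ)*s^2*ca*sa*n1*n2^2*Complex.I^2 + (-2 : ℂ)*s^2*ca*sa*n1^3*Complex.I^4 + (2 : ℂ)*s^2*ca*sa*n0^2*n1*Complex.I^2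 + (-2 : ℂ)*c^2*sa^2*n0*n2^3*Complex.I^2 + (2 : ℂ)*c^2*sa^2*n0*n1^2*n2*Complex.I^4 + (-2 : ℂ)*c^2*sa^2*n0^3*n2*Complex.I^2 + (-2 : ℂ)*c^2*ca*sa*n1*n2^2*Complex.I^2 + (2 : ℂ)*c^2*ca*sa*n1^3*Complex.I^4 + (-2 : ℂ)*c^2*ca*sa*n0^2*n1*Complex.I^2) * hp + ((2 : ℂ)*s^2*sa^2*n0*n2*Complex.I^2 + (2 : ℂ)*s^2*ca*sa*n1*Complex.I^2 + (-2 : ℂ)*s^2*ca^2*sa^2*n0*n2*Complex.I^2 + (-2 : ℂ)*s^2*ca^3*sa*n1*Complex.I^2 + (-2 : ℂ)*c^2*sa^2*n0*n2*Complex.I^2 + (-2 : ℂ)*c^2*ca*sa*n1*Complex.I^2 + (2 : ℂ)*c^2*ca^2*sa^2*n0*n2*Complex.I^2 + (2 : ℂ)*c^2*ca^3*sa*n1*Complex.I^2) * hn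

lemma calc_y2 (c s ca sa n0 n1 n2 E F : ℂ)
    (hn : n0^2 + n1^2 + n2^2 = 1) (hp : ca^2 + sa^2 = 1) (hE : E * F = 1) :
    Complex.I*(((ca - Complex.I*sa*n2)*(ca - Complex.I*sa*n2)*c + (-(Complex.I*sa*(n0 - Complex.I*n1)))*(-(Complex.I*sa*(n0 - Complex.I*n1)))*(E*s))*((Complex.I*sa*(n0 - Complex.I*n1))*(ca + Complex.I*sa*n2)*c + (ca - Complex.I*sa*n2)*(Complex.I*sa*(n0 + Complex.I*n1))*(F*s)) + ((ca - Complex.I*sa*n2)*(-(Complex.I*sa*(n0 + Complex.I*n1)))*c + (-(Complex.I*sa*(n0 - Complex.I*n1)))*(ca + Complex.I*sa*n2)*(E*s))*((Complex.I*sa*(n0 - Complex.I*n1))*(Complex.I*sa*(n0 - Complex.I*n1))*c + (ca - Complex.I*sa*n2)*(ca - Complex.I*sa*n2)*(F*s))) - Complex.I*(((-(Complex.I*sa*(n0 + Complex.I*n1)))*(ca - Complex.I*sa*n2)*c + (ca + Complex.I*sa*n2)*(-(Complex.I*sa*(n0 - Complex.I*n1)))*(E*s))*((ca + Complex.I*sa*n2)*(ca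 + Complex.I*sa*n2)*c + (Complex.I*sa*(n0 + Complex.I*n1))*(Complex.I*sa*(n0 + Complex.I*n1))*(F*s)) + ((-(Complex.I*sa*(n0 + Complex.I*n1)))*(-(Complex.I*sa*(n0 + Complex.I*n1)))*c + (ca + Complex.I*sa*n2)*(ca + Complex.I*sa*n2)*(E*s))*((ca + Complex.I*sa*n2)*(Complex.I*sa*(n0 - Complex.I*n1))*c + (Complex.I*sa*(n0 + Complex.I*n1))*(ca - Complex.I*sa*n2)*(F*s))) =
    (c^2 - s^2) * (-(2*sa*ca*n0) + 2*sa^2*n2*n1) := by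
  linear_combination ((2 : ℂ)*s^2*n1*n2 + (-2 : ℂ)*s^2*sa^2*n1*n2*Complex.I^2 + (2 : ℂ)*s^2*sa^2*n1^3*n2*Complex.I^4 + (2 : ℂ)*s^2*sa^4*n1*n2^3*E*F*Complex.I^4 + (-2 : ℂ)*s^2*sa^4*n1^3*n2*E*F*Complex.I^6 + (2 : ℂ)*s^2*sa^4*n0^2*n1*n2*E*F*Complex.I^4 + (-2 : ℂ)*s^2*ca*sa*n0 + (2 : ℂ)*s^2*ca*sa*n0*n1^2*Complex.I^2 + (2 : ℂ)*s^2*ca*sa^3*n0*n2^2*E*F*Complex.I^2 + (-2 : ℂ)*s^2*ca*sa^3*n0*n1^2*E*F*Complex.I^4 + (2 : ℂ)*s^2*ca*sa^3*n0^3*E*F*Complex.I^2 + (-2 : ℂ)*s^2*ca^2*n1*n2 + (2 : ℂ)*s^2*ca^2*sa^2*n1*n2*Complex.I^2 + (-2 : ℂ)*s^2*ca^2*sa^2*n1*n2*E*F*Complex.I^2 + (-2 : ℂ)*s^2*ca^2*sa^2*n1^3*n2*Complex.I^4 + (2 : ℂ)*s^2*ca^3*sa*n0 + (-2 : ℂ)*s^2*ca^3*sa*n0*E*F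 + (-2 : ℂ)*s^2*ca^3*sa*n0*n1^2*Complex.I^2 + (-2 : ℂ)*c^2*n1*n2 + (2 : ℂ)*c^2*sa^2*n1*n2*Complex.I^2 + (-2 : ℂ)*c^2*sa^2*n1^3*n2*Complex.I^4 + (-2 : ℂ)*c^2*sa^4*n1*n2^3*Complex.I^4 + (2 : ℂ)*c^2*sa^4*n1^3*n2*Complex.I^6 + (-2 : ℂ)*c^2*sa^4*n0^2*n1*n2*Complex.I^4 + (2 : ℂ)*c^2*ca*sa*n0 + (-2 : ℂ)*c^2*ca*sa*n0*n1^2*Complex.I^2 + (-2 : ℂ)*c^2*ca*sa^3*n0*n2^2*Complex.I^2 + (2 : ℂ)*c^2*ca*sa^3*n0*n1^2*Complex.I^4 + (-2 : ℂ)*c^2*ca*sa^3*n0^3*Complex.I^2 + (2 : ℂ)*c^2*ca^2*n1*n2 + (2 : ℂ)*c^2*ca^2*sa^2*n1^3*n2*Complex.I^4 + (2 : ℂ)*c^2*ca^3*sa*n0*n1^2*Complex.I^2) * Complex.I_sq + ((-2 : ℂ)*s^2*sa^4*n1*n2^3*Complex.I^4 + (2 : ℂ)*s^2*sa^4*n1^3*n2*Complex.I^6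 + (-2 : ℂ)*s^2*sa^4*n0^2*n1*n2*Complex.I^4 + (-2 : ℂ)*s^2*ca*sa^3*n0*n2^2*Complex.I^2 + (2 : ℂ)*s^2*ca*sa^3*n0*n1^2*Complex.I^4 + (-2 : ℂ)*s^2*ca*sa^3*n0^3*Complex.I^2 + (2 : ℂ)*s^2*ca^2*sa^2*n1*n2*Complex.I^2 + (2 : ℂ)*s^2*ca^3*sa*n0) * hE + ((2 : ℂ)*s^2*n1*n2 + (2 : ℂ)*s^2*n1*n2*Complex.I^2 + (-2 : ℂ)*s^2*sa^2*n1*n2^3*Complex.I^4 + (2 : ℂ)*s^2*sa^2*n1^3*n2*Complex.I^6 + (-2 : ℂ)*s^2*sa^2*n0^2*n1*n2*Complex.I^4 + (-2 : ℂ)*s^2*ca*sa*n0*n2^2*Complex.I^2 + (2 : ℂ)*s^2*ca*sa*n0*n1^2*Complex.I^4 + (-2 : ℂ)*s^2*ca*sa*n0^3*Complex.I^2 + (-2 : ℂ)*c^2*n1*n2 + (-2 : ℂ)*c^2*n1*n2*Complex.I^2 + (2 : ℂ)*c^2*sa^2*n1*n2^3*Complex.I^4 + (-2 : ℂ)*c^2*sa^2*n1^3*n2*Complex.I^6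 + (2 : ℂ)*c^2*sa^2*n0^2*n1*n2*Complex.I^4 + (2 : ℂ)*c^2*ca*sa*n0*n2^2*Complex.I^2 + (-2 : ℂ)*c^2*ca*sa*n0*n1^2*Complex.I^4 + (2 : ℂ)*c^2*ca*sa*n0^3*Complex.I^2) * hp + ((-2 : ℂ)*s^2*sa^2*n1*n2*Complex.I^4 + (-2 : ℂ)*s^2*ca*sa*n0*Complex.I^2 + (2 : ℂ)*s^2*ca^2*sa^2*n1*n2*Complex.I^4 + (2 : ℂ)*s^2*ca^3*sa*n0*Complex.I^2 + (2 : ℂ)*c^2*sa^2*n1*n2*Complex.I^4 + (2 : ℂ)*c^2*ca*sa*n0*Complex.I^2 + (-2 : ℂ)*c^2*ca^2*sa^2*n1*n2*Complex.I^4 + (-2 : ℂ)*c^2*ca^3*sa*n0*Complex.I^2) * hn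

lemma calc_x1 (c s ca sa n0 n1 n2 E F : ℂ)
    (hn : n0^2 + n1^2 + n2^2 = 1) (hp : ca^2 + sa^2 = 1) (hE : E * F = 1) :
    (((ca - Complex.I*sa*n2)*(ca - Complex.I*sa*n2)*c + (-(Complex.I*sa*(n0 - Complex.I*n1)))*(-(Complex.I*sa*(n0 - Complex.I*n1)))*(E*s))*((ca + Complex.I*sa*n2)*(Complex.I*sa*(n0 - Complex.I*n1))*c + (Complex.I*sa*(n0 + Complex.I*n1))*(ca - Complex.I*sa*n2)*(F*s)) + ((-(Complex.I*sa*(n0 + Complex.I*n1)))*(ca - Complex.I*sa*n2)*c + (ca + Complex.I*sa*n2)*(-(Complex.I*sa*(n0 - Complex.I*n1)))*(E*s))*((Complex.I*sa*(n0 - Complex.I*n1))*(Complex.I*sa*(n0 - Complex.I*n1))*c + (ca - Complex.I*sa*n2)*(ca - Complex.I*sa*n2)*(F*s))) + (((ca - Complex.I*sa*n2)*(-(Complex.I*sa*(n0 + Complex.I*n1)))*c + (-(Complex.I*sa*(n0 - Complex.I*n1)))*(ca + Complex.I*sa*n2)*(E*s))*((ca + Complex.I*sa*n2)*(ca + Complex.I*sa*n2)*c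 + (Complex.I*sa*(n0 + Complex.I*n1))*(Complex.I*sa*(n0 + Complex.I*n1))*(F*s)) + ((-(Complex.I*sa*(n0 + Complex.I*n1)))*(-(Complex.I*sa*(n0 + Complex.I*n1)))*c + (ca + Complex.I*sa*n2)*(ca + Complex.I*sa*n2)*(E*s))*((Complex.I*sa*(n0 - Complex.I*n1))*(ca + Complex.I*sa*n2)*c + (ca - Complex.I*sa*n2)*(Complex.I*sa*(n0 + Complex.I*n1))*(F*s))) =
    (c^2 - s^2) * (2*sa*ca*n1 + 2*sa^2*n2*n0) := by
  linear_combination ((2 : ℂ)*s^2*sa^2*n0*n2 + (-2 : ℂ)*s^2*sa^2*n0*n1^2*n2*Complex.I^2 + (-2 : ℂ)*s^2*sa^4*n0*n2^3*E*F*Complex.I^2 + (2 : ℂ)*s^2*sa^4*n0*n1^2*n2*E*F*Complex.I^4 + (-2 : ℂ)*s^2*sa^4*n0^3*n2*E*F*Complex.I^2 + (2 : ℂ)*s^2*ca*sa*n1 + (-2 : ℂ)*s^2*ca*sa*n1^3*Complex.I^2 + (-2 : ℂ)*s^2*ca*sa^3*n1*n2^2*E*F*Complex.I^2 + (2 : ℂ)*s^2*ca*sa^3*n1^3*E*F*Complex.I^4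 + (-2 : ℂ)*s^2*ca*sa^3*n0^2*n1*E*F*Complex.I^2 + (-2 : ℂ)*s^2*ca^2*sa^2*n0*n2 + (2 : ℂ)*s^2*ca^2*sa^2*n0*n2*E*F + (2 : ℂ)*s^2*ca^2*sa^2*n0*n1^2*n2*Complex.I^2 + (-2 : ℂ)*s^2*ca^3*sa*n1 + (2 : ℂ)*s^2*ca^3*sa*n1*E*F + (2 : ℂ)*s^2*ca^3*sa*n1^3*Complex.I^2 + (-2 : ℂ)*c^2*sa^2*n0*n2 + (2 : ℂ)*c^2*sa^2*n0*n1^2*n2*Complex.I^2 + (2 : ℂ)*c^2*sa^4*n0*n2^3*Complex.I^2 + (-2 : ℂ)*c^2*sa^4*n0*n1^2*n2*Complex.I^4 + (2 : ℂ)*c^2*sa^4*n0^3*n2*Complex.I^2 + (-2 : ℂ)*c^2*ca*sa*n1 + (2 : ℂ)*c^2*ca*sa*n1^3*Complex.I^2 + (2 : ℂ)*c^2*ca*sa^3*n1*n2^2*Complex.I^2 + (-2 : ℂ)*c^2*ca*sa^3*n1^3*Complex.I^4 + (2 : ℂ)*c^2*ca*sa^3*n0^2*n1*Complex.I^2 +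 (-2 : ℂ)*c^2*ca^2*sa^2*n0*n1^2*n2*Complex.I^2 + (-2 : ℂ)*c^2*ca^3*sa*n1^3*Complex.I^2) * Complex.I_sq + ((2 : ℂ)*s^2*sa^4*n0*n2^3*Complex.I^2 + (-2 : ℂ)*s^2*sa^4*n0*n1^2*n2*Complex.I^4 + (2 : ℂ)*s^2*sa^4*n0^3*n2*Complex.I^2 + (2 : ℂ)*s^2*ca*sa^3*n1*n2^2*Complex.I^2 + (-2 : ℂ)*s^2*ca*sa^3*n1^3*Complex.I^4 + (2 : ℂ)*s^2*ca*sa^3*n0^2*n1*Complex.I^2 + (-2 : ℂ)*s^2*ca^2*sa^2*n0*n2 + (-2 : ℂ)*s^2*ca^3*sa*n1) * hE + ((2 : ℂ)*s^2*sa^2*n0*n2^3*Complex.I^2 + (-2 : ℂ)*s^2*sa^2*n0*n1^2*n2*Complex.I^4 + (2 : ℂ)*s^2*sa^2*n0^3*n2*Complex.I^2 + (2 : ℂ)*s^2*ca*sa*n1*n2^2*Complex.I^2 + (-2 : ℂ)*s^2*ca*sa*n1^3*Complex.I^4 + (2 : ℂ)*s^2*ca*sa*n0^2*n1*Complex.I^2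 + (-2 : ℂ)*c^2*sa^2*n0*n2^3*Complex.I^2 + (2 : ℂ)*c^2*sa^2*n0*n1^2*n2*Complex.I^4 + (-2 : ℂ)*c^2*sa^2*n0^3*n2*Complex.I^2 + (-2 : ℂ)*c^2*ca*sa*n1*n2^2*Complex.I^2 + (2 : ℂ)*c^2*ca*sa*n1^3*Complex.I^4 + (-2 : ℂ)*c^2*ca*sa*n0^2*n1*Complex.I^2) * hp + ((2 : ℂ)*s^2*sa^2*n0*n2*Complex.I^2 + (2 : ℂ)*s^2*ca*sa*n1*Complex.I^2 + (-2 : ℂ)*s^2*ca^2*sa^2*n0*n2*Complex.I^2 + (-2 : ℂ)*s^2*ca^3*sa*n1*Complex.I^2 + (-2 : ℂ)*c^2*sa^2*n0*n2*Complex.I^2 + (-2 : ℂ)*c^2*ca*sa*n1*Complex.I^2 + (2 : ℂ)*c^2*ca^2*sa^2*n0*n2*Complex.I^2 + (2 : ℂ)*c^2*ca^3*sa*n1*Complex.I^2) * hn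

lemma calc_y1 (c s ca sa n0 n1 n2 E F : ℂ)
    (hn : n0^2 + n1^2 + n2^2 = 1) (hp : ca^2 + sa^2 = 1) (hE : E * F = 1) :
    Complex.I*(((ca - Complex.I*sa*n2)*(ca - Complex.I*sa*n2)*c + (-(Complex.I*sa*(n0 - Complex.I*n1)))*(-(Complex.I*sa*(n0 - Complex.I*n1)))*(E*s))*((ca + Complex.I*sa*n2)*(Complex.I*sa*(n0 - Complex.I*n1))*c + (Complex.I*sa*(n0 + Complex.I*n1))*(ca - Complex.I*sa*n2)*(F*s)) + ((-(Complex.I*sa*(n0 + Complex.I*n1)))*(ca - Complex.I*sa*n2)*c + (ca + Complex.I*sa*n2)*(-(Complex.I*sa*(n0 - Complex.I*n1)))*(E*s))*((Complex.I*sa*(n0 - Complex.I*n1))*(Complex.I*sa*(n0 - Complex.I*n1))*c + (ca - Complex.I*sa*n2)*(ca - Complex.I*sa*n2)*(F*s))) - Complex.I*(((ca - Complex.I*sa*n2)*(-(Complex.I*sa*(n0 + Complex.I*n1)))*c + (-(Complex.I*sa*(n0 - Complex.I*n1)))*(ca + Complex.I*sa*n2)*(E*s))*((ca + Complex.I*sa*n2)*(ca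 + Complex.I*sa*n2)*c + (Complex.I*sa*(n0 + Complex.I*n1))*(Complex.I*sa*(n0 + Complex.I*n1))*(F*s)) + ((-(Complex.I*sa*(n0 + Complex.I*n1)))*(-(Complex.I*sa*(n0 + Complex.I*n1)))*c + (ca + Complex.I*sa*n2)*(ca + Complex.I*sa*n2)*(E*s))*((Complex.I*sa*(n0 - Complex.I*n1))*(ca + Complex.I*sa*n2)*c + (ca - Complex.I*sa*n2)*(Complex.I*sa*(n0 + Complex.I*n1))*(F*s))) =
    (c^2 - s^2) * (-(2*sa*ca*n0) + 2*sa^2*n2*n1) := by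
  linear_combination ((2 : ℂ)*s^2*n1*n2 + (-2 : ℂ)*s^2*sa^2*n1*n2*Complex.I^2 + (2 : ℂ)*s^2*sa^2*n1^3*n2*Complex.I^4 + (2 : ℂ)*s^2*sa^4*n1*n2^3*E*F*Complex.I^4 + (-2 : ℂ)*s^2*sa^4*n1^3*n2*E*F*Complex.I^6 + (2 : ℂ)*s^2*sa^4*n0^2*n1*n2*E*F*Complex.I^4 + (-2 : ℂ)*s^2*ca*sa*n0 + (2 : ℂ)*s^2*ca*sa*n0*n1^2*Complex.I^2 + (2 : ℂ)*s^2*ca*sa^3*n0*n2^2*E*F*Complex.I^2 + (-2 : ℂ)*s^2*ca*sa^3*n0*n1^2*E*F*Complex.I^4 + (2 : ℂ)*s^2*ca*sa^3*n0^3*E*F*Complex.I^2 + (-2 : ℂ)*s^2*ca^2*n1*n2 + (2 : ℂ)*s^2*ca^2*sa^2*n1*n2*Complex.I^2 + (-2 : ℂ)*s^2*ca^2*sa^2*n1*n2*E*F*Complex.I^2 + (-2 : ℂ)*s^2*ca^2*sa^2*n1^3*n2*Complex.I^4 + (2 : ℂ)*s^2*ca^3*sa*n0 + (-2 : ℂ)*s^2*ca^3*sa*n0*E*F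 + (-2 : ℂ)*s^2*ca^3*sa*n0*n1^2*Complex.I^2 + (-2 : ℂ)*c^2*n1*n2 + (2 : ℂ)*c^2*sa^2*n1*n2*Complex.I^2 + (-2 : ℂ)*c^2*sa^2*n1^3*n2*Complex.I^4 + (-2 : ℂ)*c^2*sa^4*n1*n2^3*Complex.I^4 + (2 : ℂ)*c^2*sa^4*n1^3*n2*Complex.I^6 + (-2 : ℂ)*c^2*sa^4*n0^2*n1*n2*Complex.I^4 + (2 : ℂ)*c^2*ca*sa*n0 + (-2 : ℂ)*c^2*ca*sa*n0*n1^2*Complex.I^2 + (-2 : ℂ)*c^2*ca*sa^3*n0*n2^2*Complex.I^2 + (2 : ℂ)*c^2*ca*sa^3*n0*n1^2*Complex.I^4 + (-2 : ℂ)*c^2*ca*sa^3*n0^3*Complex.I^2 + (2 : ℂ)*c^2*ca^2*n1*n2 + (2 : ℂ)*c^2*ca^2*sa^2*n1^3*n2*Complex.I^4 + (2 : ℂ)*c^2*ca^3*sa*n0*n1^2*Complex.I^2) * Complex.I_sq + ((-2 : ℂ)*s^2*sa^4*n1*n2^3*Complex.I^4 + (2 : ℂ)*s^2*sa^4*n1^3*n2*Complex.I^6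 + (-2 : ℂ)*s^2*sa^4*n0^2*n1*n2*Complex.I^4 + (-2 : ℂ)*s^2*ca*sa^3*n0*n2^2*Complex.I^2 + (2 : ℂ)*s^2*ca*sa^3*n0*n1^2*Complex.I^4 + (-2 : ℂ)*s^2*ca*sa^3*n0^3*Complex.I^2 + (2 : ℂ)*s^2*ca^2*sa^2*n1*n2*Complex.I^2 + (2 : ℂ)*s^2*ca^3*sa*n0) * hE + ((2 : ℂ)*s^2*n1*n2 + (2 : ℂ)*s^2*n1*n2*Complex.I^2 + (-2 : ℂ)*s^2*sa^2*n1*n2^3*Complex.I^4 + (2 : ℂ)*s^2*sa^2*n1^3*n2*Complex.I^6 + (-2 : ℂ)*s^2*sa^2*n0^2*n1*n2*Complex.I^4 + (-2 : ℂ)*s^2*ca*sa*n0*n2^2*Complex.I^2 + (2 : ℂ)*s^2*ca*sa*n0*n1^2*Complex.I^4 + (-2 : ℂ)*s^2*ca*sa*n0^3*Complex.I^2 + (-2 : ℂ)*c^2*n1*n2 + (-2 : ℂ)*c^2*n1*n2*Complex.I^2 + (2 : ℂ)*c^2*sa^2*n1*n2^3*Complex.I^4 + (-2 : ℂ)*c^2*sa^2*n1^3*n2*Complex.I^6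 + (2 : ℂ)*c^2*sa^2*n0^2*n1*n2*Complex.I^4 + (2 : ℂ)*c^2*ca*sa*n0*n2^2*Complex.I^2 + (-2 : ℂ)*c^2*ca*sa*n0*n1^2*Complex.I^4 + (2 : ℂ)*c^2*ca*sa*n0^3*Complex.I^2) * hp + ((-2 : ℂ)*s^2*sa^2*n1*n2*Complex.I^4 + (-2 : ℂ)*s^2*ca*sa*n0*Complex.I^2 + (2 : ℂ)*s^2*ca^2*sa^2*n1*n2*Complex.I^4 + (2 : ℂ)*s^2*ca^3*sa*n0*Complex.I^2 + (2 : ℂ)*c^2*sa^2*n1*n2*Complex.I^4 + (2 : ℂ)*c^2*ca*sa*n0*Complex.I^2 + (-2 : ℂ)*c^2*ca^2*sa^2*n1*n2*Complex.I^4 + (-2 : ℂ)*c^2*ca^3*sa*n0*Complex.I^2) * hn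

lemma conj_dm2 (M : Matrix (Fin 2 × Fin 2) (Fin 2 × Fin 2) ℂ) (u : (Fin 2 × Fin 2) → ℂ) :
    M * Matrix.vecMulVec u (star u) * Mᴴ = Matrix.vecMulVec (M *ᵥ u) (star (M *ᵥ u)) := by
  ext ⟨i, k⟩ ⟨j, l⟩
  simp [Matrix.mul_apply, Matrix.vecMulVec_apply, Matrix.conjTranspose_apply,
    Matrix.mulVec, dotProduct, Fintype.sum_prod_type, Fin.sum_univ_two, star_mul',
    Finset.sum_mul, Finset.mul_sum]
  ring

lemma kron_dm (a b : Fin 2 → ℂ) :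
    dm a ⊗ₖ dm b = Matrix.vecMulVec (fun p => a p.1 * b p.2)
      (star fun p => a p.1 * b p.2) := by
  ext ⟨i, k⟩ ⟨j, l⟩
  simp [dm, Matrix.vecMulVec_apply, Matrix.kroneckerMap_apply, star_mul']
  ring

set_option maxHeartbeats 2000000 in
/-- W_sync C₁₂ achieves perfect quantum-phase synchronization for
ρ = |ψ₁⟩⟨ψ₁| ⊗ |0⟩⟨0| with θ₁ ≠ π/2. -/
theorem wsync_cnot_perfect_qps (θ₁ φ₁ : ℝ)
    (h0 : 0 ≤ θ₁) (hπ : θ₁ ≤ π) (hne : θ₁ ≠ π / 2)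
    (nhat : Fin 3 → ℝ) (hn : nhat ⬝ᵥ nhat = 1) (α : ℝ)
    (hxy : ¬(rot3 nhat α ![0, 0, 1] 0 = 0 ∧ rot3 nhat α ![0, 0, 1] 1 = 0)) :
    mvec (ptrace2 (((Raxis nhat α ⊗ₖ Raxis nhat α) * CNOT12) *
        (dm (ψ θ₁ φ₁) ⊗ₖ dm ![(1 : ℂ), 0]) *
        ((Raxis nhat α ⊗ₖ Raxis nhat α) * CNOT12)ᴴ)) ≠ 0 ∧
    mvec (ptrace1 (((Raxis nhat α ⊗ₖ Raxis nhat α) * CNOT12) *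
        (dm (ψ θ₁ φ₁) ⊗ₖ dm ![(1 : ℂ), 0]) *
        ((Raxis nhat α ⊗ₖ Raxis nhat α) * CNOT12)ᴴ)) ≠ 0 ∧
    PSF (dm (ψ θ₁ φ₁) ⊗ₖ dm ![(1 : ℂ), 0])
      ((Raxis nhat α ⊗ₖ Raxis nhat α) * CNOT12) = 1 := by
  classical
  set c : ℝ := Real.cos (θ₁ / 2) with hc
  set s : ℝ := Real.sin (θ₁ / 2) with hs
  set ca : ℝ := Real.cos (α / 2) with hca
  set sa : ℝ := Real.sin (α / 2) with hsa
  set n0 : ℝ := nhat 0 with hn0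
  set n1 : ℝ := nhat 1 with hn1
  set n2 : ℝ := nhat 2 with hn2
  set E : ℂ := Complex.exp (Complex.I * φ₁) with hEdef
  set F : ℂ := (starRingEnd ℂ) E with hFdef
  have hnC : (n0 : ℂ)^2 + (n1 : ℂ)^2 + (n2 : ℂ)^2 = 1 := by
    have h := hn
    simp [dotProduct, Fin.sum_univ_three] at h
    have : n0^2 + n1^2 + n2^2 = 1 := by nlinarith [h]
    exact_mod_cast congrArg (fun x : ℝ => (x : ℂ)) this
  have hpC : (ca : ℂ)^2 + (sa : ℂ)^2 = 1 := by
    have := Real.cos_sq_add_sin_sq (α / 2)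
    exact_mod_cast congrArg (fun x : ℝ => (x : ℂ)) this
  have hEC : E * F = 1 := by
    rw [hFdef, hEdef, ← Complex.exp_conj, ← Complex.exp_add]
    have : Complex.I * ↑φ₁ + (starRingEnd ℂ) (Complex.I * ↑φ₁) = 0 := by
      simp [_root_.map_mul, Complex.conj_I, Complex.conj_ofReal]
    rw [this, Complex.exp_zero]
  -- the explicit rotation matrix
  set RE : Matrix (Fin 2) (Fin 2) ℂ :=
    !![(ca : ℂ) - Complex.I*(sa:ℂ)*(n2:ℂ), -(Complex.I*(sa:ℂ)*((n0:ℂ) - Complex.I*(n1:ℂ)));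
       -(Complex.I*(sa:ℂ)*((n0:ℂ) + Complex.I*(n1:ℂ))), (ca:ℂ) + Complex.I*(sa:ℂ)*(n2:ℂ)] with hREdef
  have hRE : Raxis nhat α = RE := by
    ext i j
    fin_cases i <;> fin_cases j <;>
      simp only [Raxis, pauliX, pauliY, pauliZ, hREdef, Matrix.one_fin_two, Matrix.sub_apply,
        Matrix.add_apply, Matrix.smul_apply, smul_eq_mul, Matrix.cons_val',
        Matrix.cons_val_zero, Matrix.cons_val_one, Matrix.head_cons,
        Matrix.head_fin_const, Matrix.empty_val', Matrix.cons_val_fin_one,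
        Fin.mk_zero, Fin.mk_one, Matrix.of_apply] <;> ring
  -- the state vector
  set v : (Fin 2 × Fin 2) → ℂ := fun p => ψ θ₁ φ₁ p.1 * (![(1:ℂ), 0]) p.2 with hvdef
  have hρ : dm (ψ θ₁ φ₁) ⊗ₖ dm ![(1:ℂ), 0] = Matrix.vecMulVec v (star v) := kron_dm _ _
  set wf : (Fin 2 × Fin 2) → ℂ :=
    fun p => RE p.1 0 * RE p.2 0 * (c : ℂ) + RE p.1 1 * RE p.2 1 * (E * (s : ℂ)) with hwfdef
  have hw : (((Raxis nhat α) ⊗ₖ (Raxis nhat α)) * CNOT12) *ᵥ v = wf := by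
    rw [hRE]
    funext p
    obtain ⟨a, k⟩ := p
    rw [← Matrix.mulVec_mulVec]
    have hχ : CNOT12 *ᵥ v = fun p => if p = ((0 : Fin 2), (0 : Fin 2)) then (c : ℂ)
        else if p = (1, 1) then E * (s : ℂ) else 0 := by
      funext q
      obtain ⟨a', k'⟩ := q
      fin_cases a' <;> fin_cases k' <;>
        simp [CNOT12, Matrix.mulVec, dotProduct, Fintype.sum_prod_type,
          Fin.sum_univ_two, hvdef, ψ, ← hc, ← hs, hEdef, Prod.ext_iff] <;> ring
    rw [hχ]
    fin_cases a <;> fin_cases k <;>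
      simp [Matrix.mulVec, dotProduct, Fintype.sum_prod_type, Fin.sum_univ_two,
        Matrix.kroneckerMap_apply, hwfdef, Prod.ext_iff] <;> ring
  set σ : Matrix (Fin 2 × Fin 2) (Fin 2 × Fin 2) ℂ :=
    (((Raxis nhat α ⊗ₖ Raxis nhat α) * CNOT12) *
        (dm (ψ θ₁ φ₁) ⊗ₖ dm ![(1 : ℂ), 0]) *
        ((Raxis nhat α ⊗ₖ Raxis nhat α) * CNOT12)ᴴ) with hσdef
  have hσ : σ = Matrix.vecMulVec wf (star wf) := by
    rw [hσdef, hρ, conj_dm2, hw]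
  -- the four trace identities
  have hx2 : Matrix.trace (pauliX * ptrace2 σ) =
      (((c^2 - s^2) * (2*sa*ca*n1 + 2*sa^2*n2*n0) : ℝ) : ℂ) := by
    rw [hσ]
    simp only [Matrix.trace, Matrix.mul_apply, ptrace2, Matrix.vecMulVec_apply,
      Fin.sum_univ_two, Matrix.diag_apply, pauliX, hwfdef, hREdef,
      Matrix.cons_val', Matrix.cons_val_zero, Matrix.cons_val_one, Matrix.head_cons,
      Matrix.head_fin_const, Matrix.empty_val', Matrix.cons_val_fin_one,
      Fin.mk_zero, Fin.mk_one, Matrix.of_apply,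
      Pi.star_apply, star_add, star_mul', star_sub, star_neg, Complex.star_def,
      _root_.map_mul, _root_.map_add, _root_.map_sub, _root_.map_neg, Complex.conj_ofReal, Complex.conj_I, ← hFdef]
    push_cast
    linear_combination calc_x2 (c:ℂ) (s:ℂ) (ca:ℂ) (sa:ℂ) (n0:ℂ) (n1:ℂ) (n2:ℂ) E F hnC hpC hEC
  have hy2 : Matrix.trace (pauliY * ptrace2 σ) =
      (((c^2 - s^2) * (-(2*sa*ca*n0) + 2*sa^2*n2*n1) : ℝ) : ℂ) := by
    rw [hσ]
    simp only [Matrix.trace, Matrix.mul_apply, ptrace2, Matrix.vecMulVec_apply,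
      Fin.sum_univ_two, Matrix.diag_apply, pauliY, hwfdef, hREdef,
      Matrix.cons_val', Matrix.cons_val_zero, Matrix.cons_val_one, Matrix.head_cons,
      Matrix.head_fin_const, Matrix.empty_val', Matrix.cons_val_fin_one,
      Fin.mk_zero, Fin.mk_one, Matrix.of_apply,
      Pi.star_apply, star_add, star_mul', star_sub, star_neg, Complex.star_def,
      _root_.map_mul, _root_.map_add, _root_.map_sub, _root_.map_neg, Complex.conj_ofReal, Complex.conj_I, ← hFdef]
    push_cast
    linear_combination calc_y2 (c:ℂ) (s:ℂ) (ca:ℂ) (sa:ℂ) (n0:ℂ) (n1:ℂ) (n2:ℂ) E F hnC hpC hEC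
  have hx1 : Matrix.trace (pauliX * ptrace1 σ) =
      (((c^2 - s^2) * (2*sa*ca*n1 + 2*sa^2*n2*n0) : ℝ) : ℂ) := by
    rw [hσ]
    simp only [Matrix.trace, Matrix.mul_apply, ptrace1, Matrix.vecMulVec_apply,
      Fin.sum_univ_two, Matrix.diag_apply, pauliX, hwfdef, hREdef,
      Matrix.cons_val', Matrix.cons_val_zero, Matrix.cons_val_one, Matrix.head_cons,
      Matrix.head_fin_const, Matrix.empty_val', Matrix.cons_val_fin_one,
      Fin.mk_zero, Fin.mk_one, Matrix.of_apply,
      Pi.star_apply, star_add, star_mul', star_sub, star_neg, Complex.star_def,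
      _root_.map_mul, _root_.map_add, _root_.map_sub, _root_.map_neg, Complex.conj_ofReal, Complex.conj_I, ← hFdef]
    push_cast
    linear_combination calc_x1 (c:ℂ) (s:ℂ) (ca:ℂ) (sa:ℂ) (n0:ℂ) (n1:ℂ) (n2:ℂ) E F hnC hpC hEC
  have hy1 : Matrix.trace (pauliY * ptrace1 σ) =
      (((c^2 - s^2) * (-(2*sa*ca*n0) + 2*sa^2*n2*n1) : ℝ) : ℂ) := by
    rw [hσ]
    simp only [Matrix.trace, Matrix.mul_apply, ptrace1, Matrix.vecMulVec_apply,
      Fin.sum_univ_two, Matrix.diag_apply, pauliY, hwfdef, hREdef,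
      Matrix.cons_val', Matrix.cons_val_zero, Matrix.cons_val_one, Matrix.head_cons,
      Matrix.head_fin_const, Matrix.empty_val', Matrix.cons_val_fin_one,
      Fin.mk_zero, Fin.mk_one, Matrix.of_apply,
      Pi.star_apply, star_add, star_mul', star_sub, star_neg, Complex.star_def,
      _root_.map_mul, _root_.map_add, _root_.map_sub, _root_.map_neg, Complex.conj_ofReal, Complex.conj_I, ← hFdef]
    push_cast
    linear_combination calc_y1 (c:ℂ) (s:ℂ) (ca:ℂ) (sa:ℂ) (n0:ℂ) (n1:ℂ) (n2:ℂ) E F hnC hpC hEC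
  -- rot3 components
  have hsin : Real.sin α = 2 * sa * ca := by
    rw [show α = 2 * (α / 2) by ring, Real.sin_two_mul]
  have hcos : Real.cos α = 1 - 2 * sa^2 := by
    rw [show α = 2 * (α / 2) by ring, Real.cos_two_mul]
    have := Real.cos_sq_add_sin_sq (α / 2)
    nlinarith [this]
  have hW0 : rot3 nhat α ![0, 0, 1] 0 = 2*sa*ca*n1 + 2*sa^2*n2*n0 := by
    simp [rot3, crossProduct, dotProduct, Fin.sum_univ_three, hsin, hcos,
      ← hn0, ← hn1, ← hn2]
  have hW1 : rot3 nhat α ![0, 0, 1] 1 = -(2*sa*ca*n0) + 2*sa^2*n2*n1 := by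
    simp [rot3, crossProduct, dotProduct, Fin.sum_univ_three, hsin, hcos,
      ← hn0, ← hn1, ← hn2]
  -- cos θ₁ ≠ 0
  have hKcs : Real.cos θ₁ = c^2 - s^2 := by
    rw [show θ₁ = 2 * (θ₁ / 2) by ring, Real.cos_two_mul]
    have := Real.cos_sq_add_sin_sq (θ₁ / 2)
    nlinarith [this]
  have hKne : c^2 - s^2 ≠ 0 := by
    rw [← hKcs]
    intro h
    apply hne
    refine Real.injOn_cos ⟨h0, hπ⟩ ⟨by positivity, by linarith [Real.pi_pos]⟩ ?_
    rw [h, Real.cos_pi_div_two]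
  set W0 : ℝ := 2*sa*ca*n1 + 2*sa^2*n2*n0 with hW0def
  set W1 : ℝ := -(2*sa*ca*n0) + 2*sa^2*n2*n1 with hW1def
  have hWne : W0 ≠ 0 ∨ W1 ≠ 0 := by
    by_contra h
    push_neg at h
    exact hxy ⟨by rw [hW0, h.1], by rw [hW1, h.2]⟩
  have hmvec2 : mvec (ptrace2 σ) = ![(c^2 - s^2) * W0, (c^2 - s^2) * W1] := by
    funext i
    fin_cases i <;>
      simp only [mvec, Matrix.cons_val_zero, Matrix.cons_val_one, Matrix.head_cons,
        Fin.mk_zero, Fin.mk_one, Fin.isValue] <;>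
      first
        | (rw [hx2]; exact Complex.ofReal_re _)
        | (rw [hy2]; exact Complex.ofReal_re _)
  have hmvec1 : mvec (ptrace1 σ) = ![(c^2 - s^2) * W0, (c^2 - s^2) * W1] := by
    funext i
    fin_cases i <;>
      simp only [mvec, Matrix.cons_val_zero, Matrix.cons_val_one, Matrix.head_cons,
        Fin.mk_zero, Fin.mk_one, Fin.isValue] <;>
      first
        | (rw [hx1]; exact Complex.ofReal_re _)
        | (rw [hy1]; exact Complex.ofReal_re _)
  have hmne : (![(c^2 - s^2) * W0, (c^2 - s^2) * W1] : Fin 2 → ℝ) ≠ 0 := by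
    intro h
    rcases hWne with hW | hW
    · have := congrFun h 0
      simp at this
      rcases this with h' | h' <;> [exact hKne h'; exact hW h']
    · have := congrFun h 1
      simp at this
      rcases this with h' | h' <;> [exact hKne h'; exact hW h']
  refine ⟨by rw [hmvec2]; exact hmne, by rw [hmvec1]; exact hmne, ?_⟩
  -- PSF = 1
  have hpos : 0 < ((c^2 - s^2) * W0)^2 + ((c^2 - s^2) * W1)^2 := by
    rcases hWne with hW | hW
    · have h1 : 0 < ((c^2 - s^2) * W0)^2 := by positivity
      nlinarith [sq_nonneg ((c^2 - s^2) * W1)]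
    · have h1 : 0 < ((c^2 - s^2) * W1)^2 := by positivity
      nlinarith [sq_nonneg ((c^2 - s^2) * W0)]
  simp only [PSF, phaseFid, mdot, mnorm]
  rw [← hσdef, hmvec2, hmvec1]
  simp only [Matrix.cons_val_zero, Matrix.cons_val_one, Matrix.head_cons]
  rw [Real.mul_self_sqrt hpos.le]
  rw [show ((c^2 - s^2) * W0) * ((c^2 - s^2) * W0) + ((c^2 - s^2) * W1) * ((c^2 - s^2) * W1)
      = ((c^2 - s^2) * W0)^2 + ((c^2 - s^2) * W1)^2 by ring]
  exact div_self hpos.ne'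


end
end

section
/- Let |ψ_i⟩ = (|0⟩ + e^{iφ_i}|1⟩)/√2, i = 1,2, be pure equatorial qubit states and let U_max = ((R_z(π/2)) ⊗ 1₂) U_c(3π/4, π/4, π/4) with U_c(α,β,γ) = C₂₁ (1₂ ⊗ R_y(β)) C₁₂ (R_z(γ) ⊗ R_y(α)) C₂₁. Then the concurrence of the final two-qubit pure state U_max(|ψ₁⟩⊗|ψ₂⟩) equals C = (1 + sin(Δφ))/2 with Δφ = φ₂ − φ₁. -/
/-!
The concurrence `2 |ad - bc|` is twice the modulus of the determinant of the coefficient matrix,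
and a local gate `A ⊗ B` multiplies that matrix by `A` and `Bᵀ`; since `det R_z = 1`, the final
`R_z(π/2) ⊗ 1` does not change the concurrence. Through `U_c` the amplitudes can be computed in
closed form: `R_y(π/4)` and `R_y(3π/4)` both have entries `±cos(π/8)`, `±sin(π/8)`, and only
`cos² + sin² = 1` and `cos² - sin² = 2 sin cos = √2/2` are needed to combine them. The
determinant of the output then reduces, through `e^{iπ/2} = i` and
`e^{2iφ₁} - e^{2iφ₂} = -2i sin(φ₂ - φ₁) e^{i(φ₁ + φ₂)}`, to
`-e^{-iπ/4} e^{i(φ₁ + φ₂)} (1 + sin(φ₂ - φ₁)) / 4`.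
-/

open Matrix Complex Real Kronecker
open scoped ComplexOrder

noncomputable section

def concurrence (w : Fin 2 × Fin 2 → ℂ) : ℝ :=
  ‖2 * (w (0, 0) * w (1, 1) - w (0, 1) * w (1, 0))‖

-- Two-qubit states are written `vec X` with Mathlib's `Matrix.vec`, which puts `X j i` at
-- `(i, j)`: `X` is the transpose of the usual coefficient matrix.
theorem concurrence_vec (X : Matrix (Fin 2) (Fin 2) ℂ) : concurrence (vec X) = ‖2 * X.det‖ := by
  rw [concurrence, det_fin_two]
  simp only [vec]
  ring_nf

theorem concurrence_kronecker_mulVec (P Q : Matrix (Fin 2) (Fin 2) ℂ) (w : Fin 2 × Fin 2 → ℂ) :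
    concurrence ((P ⊗ₖ Q) *ᵥ w) = ‖P.det‖ * ‖Q.det‖ * concurrence w := by
  obtain ⟨X, rfl⟩ := vec_bijective.surjective w
  rw [kronecker_mulVec_vec, concurrence_vec, concurrence_vec, det_mul, det_mul, det_transpose]
  simp only [norm_mul]
  ring

theorem det_Rz (γ : ℝ) : (Rz γ).det = 1 := by
  simp [Rz, det_fin_two, ← Complex.exp_add]

theorem CNOT12_mulVec_vec (X : Matrix (Fin 2) (Fin 2) ℂ) :
    CNOT12 *ᵥ vec X = vec !![X 0 0, X 1 1; X 1 0, X 0 1] := by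
  ext ⟨i, j⟩
  fin_cases i <;> fin_cases j <;>
    simp [CNOT12, mulVec, dotProduct, Fintype.sum_prod_type, Fin.sum_univ_two]

theorem CNOT21_mulVec_vec (X : Matrix (Fin 2) (Fin 2) ℂ) :
    CNOT21 *ᵥ vec X = vec !![X 0 0, X 0 1; X 1 1, X 1 0] := by
  ext ⟨i, j⟩
  fin_cases i <;> fin_cases j <;>
    simp [CNOT21, mulVec, dotProduct, Fintype.sum_prod_type, Fin.sum_univ_two]

theorem Ry_pi_div_four : Ry (π / 4) = !![(Real.cos (π / 8) : ℂ), -(Real.sin (π / 8) : ℂ);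
    (Real.sin (π / 8) : ℂ), (Real.cos (π / 8) : ℂ)] := by
  rw [Ry, div_div]; norm_num

theorem Ry_three_pi_div_four : Ry (3 * π / 4) = !![(Real.sin (π / 8) : ℂ), -(Real.cos (π / 8) : ℂ);
    (Real.cos (π / 8) : ℂ), (Real.sin (π / 8) : ℂ)] := by
  have h : 3 * π / 4 / 2 = π / 2 - π / 8 := by ring
  rw [Ry, h, Real.cos_pi_div_two_sub, Real.sin_pi_div_two_sub]

theorem equatorial_product (φ₁ φ₂ : ℝ) :
    (fun i : Fin 2 × Fin 2 => ψ (π / 2) φ₁ i.1 * ψ (π / 2) φ₂ i.2) =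
      vec !![1 / 2, exp (I * φ₁) / 2; exp (I * φ₂) / 2, exp (I * φ₁) * exp (I * φ₂) / 2] := by
  have hcos : Real.cos (π / 2 / 2) = √2 / 2 := by rw [div_div]; norm_num
  have hsin : Real.sin (π / 2 / 2) = √2 / 2 := by rw [div_div]; norm_num
  have hsq : (√2 : ℂ) ^ 2 = 2 := by rw [← ofReal_pow]; norm_num
  ext ⟨i, j⟩
  fin_cases i <;> fin_cases j <;> simp [ψ, hcos, hsin] <;> ring_nf <;> simp only [hsq] <;> ring

theorem Uc_mulVec_equatorial (γ φ₁ φ₂ : ℝ) :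
    Uc (3 * π / 4) (π / 4) γ *ᵥ (fun i => ψ (π / 2) φ₁ i.1 * ψ (π / 2) φ₂ i.2) =
      vec !![-(exp (-(I * γ / 2)) * exp (I * φ₁) * exp (I * φ₂)) / 2,
          exp (I * γ / 2) * (exp (I * φ₁) + exp (I * φ₂)) * √2 / 4;
        exp (I * γ / 2) * (exp (I * φ₁) - exp (I * φ₂)) * √2 / 4,
          exp (-(I * γ / 2)) / 2] := by
  have hunit : (Real.cos (π / 8) : ℂ) ^ 2 + (Real.sin (π / 8) : ℂ) ^ 2 = 1 := by
    exact_mod_cast Real.cos_sq_add_sin_sq (π / 8)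
  have hdiff : (Real.cos (π / 8) : ℂ) ^ 2 - (Real.sin (π / 8) : ℂ) ^ 2 = √2 / 2 := by
    have h := Real.cos_two_mul' (π / 8)
    rw [show 2 * (π / 8) = π / 4 by ring, Real.cos_pi_div_four] at h
    exact_mod_cast h.symm
  have hprod : 2 * (Real.sin (π / 8) : ℂ) * (Real.cos (π / 8) : ℂ) = √2 / 2 := by
    have h := Real.sin_two_mul (π / 8)
    rw [show 2 * (π / 8) = π / 4 by ring, Real.sin_pi_div_four] at h
    exact_mod_cast h.symm
  simp only [Uc, ← mulVec_mulVec, equatorial_product, CNOT21_mulVec_vec, kronecker_mulVec_vec,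
    CNOT12_mulVec_vec, Ry_pi_div_four, Ry_three_pi_div_four]
  generalize (Real.cos (π / 8) : ℂ) = c at *
  generalize (Real.sin (π / 8) : ℂ) = s at *
  congr 1
  ext i j
  fin_cases i <;> fin_cases j <;> simp [Rz, mul_apply, Fin.sum_univ_two]
  · linear_combination -(exp (-(I * γ / 2)) * exp (I * φ₁) * exp (I * φ₂)) / 2 * hunit
  · linear_combination exp (I * γ / 2) * (exp (I * φ₁) * hdiff + exp (I * φ₂) * hprod) / 2
  · linear_combination exp (I * γ / 2) * (exp (I * φ₁) * hprod - exp (I * φ₂) * hdiff) / 2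
  · linear_combination exp (-(I * γ / 2)) / 2 * hunit

theorem exp_sq_sub_exp_sq (a b : ℝ) :
    exp (I * a) ^ 2 - exp (I * b) ^ 2 = -2 * I * Real.sin (b - a) * exp (I * a) * exp (I * b) := by
  have h₁ : exp (-↑(b - a) * I) * (exp (I * a) * exp (I * b)) = exp (I * a) ^ 2 := by
    rw [← Complex.exp_add, ← Complex.exp_add, sq, ← Complex.exp_add]; congr 1; push_cast; ring
  have h₂ : exp (↑(b - a) * I) * (exp (I * a) * exp (I * b)) = exp (I * b) ^ 2 := by
    rw [← Complex.exp_add, ← Complex.exp_add, sq, ← Complex.exp_add]; congr 1; push_cast; ring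
  rw [ofReal_sin, Complex.sin]
  linear_combination -h₁ + h₂ +
    (exp (-↑(b - a) * I) - exp (↑(b - a) * I)) * (exp (I * a) * exp (I * b)) * I_sq

theorem concurrence_Uc_equatorial (φ₁ φ₂ : ℝ) :
    concurrence (Uc (3 * π / 4) (π / 4) (π / 4) *ᵥ
      (fun i => ψ (π / 2) φ₁ i.1 * ψ (π / 2) φ₂ i.2)) = (1 + Real.sin (φ₂ - φ₁)) / 2 := by
  rw [Uc_mulVec_equatorial, concurrence_vec, det_fin_two]
  simp only [of_apply, cons_val', cons_val_zero, cons_val_one, empty_val', cons_val_fin_one]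
  set ω := exp (I * ↑(π / 4) / 2)
  set ω' := exp (-(I * ↑(π / 4) / 2))
  set e₁ := exp (I * φ₁)
  set e₂ := exp (I * φ₂)
  set S := Real.sin (φ₂ - φ₁)
  have hinv : ω' * ω = 1 := by rw [← Complex.exp_add, neg_add_cancel, Complex.exp_zero]
  have hquart : ω ^ 4 = I := by
    rw [← Complex.exp_nat_mul, show ((4 : ℕ) : ℂ) * (I * ↑(π / 4) / 2) = ↑(π / 2) * I by
      push_cast; ring, exp_mul_I, ← ofReal_cos, ← ofReal_sin, Real.cos_pi_div_two,
      Real.sin_pi_div_two]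
    simp
  have hsq : (√2 : ℂ) ^ 2 = 2 := by rw [← ofReal_pow]; norm_num
  have hsub : e₁ ^ 2 - e₂ ^ 2 = -2 * I * S * e₁ * e₂ := exp_sq_sub_exp_sq φ₁ φ₂
  have hdet : 2 * (-(ω' * e₁ * e₂) / 2 * (ω' / 2) -
      ω * (e₁ + e₂) * √2 / 4 * (ω * (e₁ - e₂) * √2 / 4)) = -(ω' ^ 2 * e₁ * e₂) / 2 * ↑(1 + S) := by
    rw [ofReal_add, ofReal_one]
    -- `ω'ω = 1` and `ω⁴ = i` give `i ω² = -ω'²`, which merges the `sin` term into the `ω'²` term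
    linear_combination (-ω ^ 2 * (e₁ ^ 2 - e₂ ^ 2) / 8) * hsq + (-ω ^ 2 / 4) * hsub
      + (S * e₁ * e₂ / 2) *
        (-I * ω ^ 2 * (ω' * ω + 1) * hinv + I * ω' ^ 2 * hquart + ω' ^ 2 * I_sq)
  have hω' : ‖ω'‖ = 1 := by simp [ω', Complex.norm_exp]
  have hS : 0 ≤ 1 + S := by linarith [Real.neg_one_le_sin (φ₂ - φ₁)]
  rw [hdet]
  simp only [norm_mul, norm_div, norm_neg, norm_pow, hω', e₁, e₂, Complex.norm_exp_I_mul_ofReal,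
    norm_real, Real.norm_eq_abs, abs_of_nonneg hS, Complex.norm_ofNat]
  ring

/-- the concurrence of U_max(|ψ₁⟩⊗|ψ₂⟩) for pure equatorial
states equals (1 + sin(φ₂ − φ₁))/2. -/
theorem umax_concurrence (φ₁ φ₂ : ℝ) :
    ∀ w : Fin 2 × Fin 2 → ℂ,
    w = ((Rz (π / 2) ⊗ₖ (1 : Matrix (Fin 2) (Fin 2) ℂ)) *
          Uc (3 * π / 4) (π / 4) (π / 4)).mulVec
        (fun i => ψ (π / 2) φ₁ i.1 * ψ (π / 2) φ₂ i.2) →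
    ‖2 * (w (0, 0) * w (1, 1) - w (0, 1) * w (1, 0))‖ =
      (1 + Real.sin (φ₂ - φ₁)) / 2 := by
  rintro w rfl
  change concurrence _ = _
  rw [← mulVec_mulVec, concurrence_kronecker_mulVec, det_Rz, det_one, norm_one, one_mul, one_mul,
    concurrence_Uc_equatorial]
end
end

section
/- For the entangling circuit U_c(α,β,γ) = C₂₁ (1₂ ⊗ R_y(β)) C₁₂ (R_z(γ) ⊗ R_y(α)) C₂₁ applied to initial pure product states, the phase synchronization fidelity obeys the antisymmetry F(φ₁+π, φ₂, θ₁, θ₂) evaluated after the substitution (φ₁,φ₂,θ₁,θ₂) ↦ (−φ₁, −φ₂, π−θ₁, π−θ₂) equals minus the original value; explicitly, F(−φ₁+π, −φ₂, π−θ₁, π−θ₂) = −F(φ₁, φ₂, θ₁, θ₂) for all parameter values at which both sides are defined, where F(φ₁,φ₂,θ₁,θ₂) denotes F(|ψ(θ₁,φ₁)⟩⟨ψ(θ₁,φ₁)| ⊗ |ψ(θ₂,φ₂)⟩⟨ψ(θ₂,φ₂)|, U_c(α,β,γ)). -/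
open Matrix Complex Real Kronecker
open scoped ComplexOrder

noncomputable section

/-! The Pauli operator `σ_y ⊗ σ_x` implements the substitution on product states: `σ_x` sends
`ψ(θ, φ)` to `ψ(π - θ, -φ)` and `σ_y` sends it to `ψ(π - θ, π - φ)`, up to phases. Pushed through
the circuit it becomes `σ_x ⊗ σ_y`, because each gate of `U_c` intertwines the Pauli products
`σ_y ⊗ σ_x → σ_z ⊗ σ_y → 1 ⊗ σ_y → σ_x ⊗ σ_y`. The reduced states are then conjugated by `σ_x`
and by `σ_y` respectively, which flip the sign of the `y`- and of the `x`-component of their Bloch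
vectors, so the normalised scalar product of the two `m`-vectors changes sign. -/

theorem pauliX_conjTranspose : pauliXᴴ = pauliX := by
  ext i j
  fin_cases i <;> fin_cases j <;> simp [pauliX]

theorem pauliY_conjTranspose : pauliYᴴ = pauliY := by
  ext i j
  fin_cases i <;> fin_cases j <;> simp [pauliY]

theorem pauliX_conjTranspose_mul_self : pauliXᴴ * pauliX = 1 := by
  rw [pauliX_conjTranspose]
  ext i j
  fin_cases i <;> fin_cases j <;> simp [pauliX]

theorem pauliY_conjTranspose_mul_self : pauliYᴴ * pauliY = 1 := by
  rw [pauliY_conjTranspose]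
  ext i j
  fin_cases i <;> fin_cases j <;> simp [pauliY]

theorem dm_mulVec (A : Matrix (Fin 2) (Fin 2) ℂ) (v : Fin 2 → ℂ) :
    dm (A *ᵥ v) = A * dm v * Aᴴ := by
  rw [dm, dm, star_mulVec, mul_vecMulVec, vecMulVec_mul]

theorem dm_smul_of_mul_star_self {c : ℂ} (hc : c * star c = 1) (v : Fin 2 → ℂ) :
    dm (c • v) = dm v := by
  ext i j
  simp only [dm, star_smul, vecMulVec_apply, Pi.smul_apply, smul_eq_mul]
  linear_combination v i * star (v j) * hc

theorem exp_neg_I_mul_mul_star (φ : ℝ) : cexp (-(I * φ)) * star (cexp (-(I * φ))) = 1 := by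
  rw [Complex.star_def, ← Complex.exp_conj, ← Complex.exp_add]
  simp

theorem ψ_pi_sub_neg (θ φ : ℝ) :
    ψ (π - θ) (-φ) = cexp (-(I * φ)) • (pauliX *ᵥ ψ θ φ) := by
  have hθ : (π - θ) / 2 = π / 2 - θ / 2 := by ring
  ext i
  fin_cases i <;> simp [ψ, pauliX, hθ, Real.cos_pi_div_two_sub, Real.sin_pi_div_two_sub,
    ← mul_assoc, ← Complex.exp_add]

theorem ψ_pi_sub_neg_add_pi (θ φ : ℝ) :
    ψ (π - θ) (-φ + π) = (I * cexp (-(I * φ))) • (pauliY *ᵥ ψ θ φ) := by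
  have hθ : (π - θ) / 2 = π / 2 - θ / 2 := by ring
  have hφ : cexp (I * (-φ + π)) = -cexp (-(I * φ)) := by
    rw [mul_add, Complex.exp_add, mul_comm I π, Complex.exp_pi_mul_I, mul_neg_one, mul_neg]
  have hinv : cexp (-(I * φ)) * cexp (I * φ) = 1 := by rw [← Complex.exp_add]; simp
  ext i
  fin_cases i <;> simp [ψ, pauliY, hθ, hφ, Real.cos_pi_div_two_sub, Real.sin_pi_div_two_sub]
  · linear_combination (-Complex.sin (θ / 2)) * hinv
      + cexp (-(I * φ)) * cexp (I * φ) * Complex.sin (θ / 2) * I_sq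
  · linear_combination (-cexp (-(I * φ)) * Complex.cos (θ / 2)) * I_sq

theorem dm_ψ_pi_sub_neg (θ φ : ℝ) :
    dm (ψ (π - θ) (-φ)) = pauliX * dm (ψ θ φ) * pauliXᴴ := by
  rw [ψ_pi_sub_neg, dm_smul_of_mul_star_self (exp_neg_I_mul_mul_star φ), dm_mulVec]

theorem dm_ψ_pi_sub_neg_add_pi (θ φ : ℝ) :
    dm (ψ (π - θ) (-φ + π)) = pauliY * dm (ψ θ φ) * pauliYᴴ := by
  have hc : I * cexp (-(I * φ)) * star (I * cexp (-(I * φ))) = 1 := by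
    have hI : I * star I = 1 := by simp
    rw [star_mul']
    linear_combination cexp (-(I * φ)) * star (cexp (-(I * φ))) * hI + exp_neg_I_mul_mul_star φ
  rw [ψ_pi_sub_neg_add_pi, dm_smul_of_mul_star_self hc, dm_mulVec]

theorem ry_commute_pauliY (β : ℝ) : Commute (Ry β) pauliY := by
  ext i j
  fin_cases i <;> fin_cases j <;> simp [Ry, pauliY, mul_apply, Fin.sum_univ_two] <;> ring

theorem rz_commute_pauliZ (γ : ℝ) : Commute (Rz γ) pauliZ := by
  ext i j
  fin_cases i <;> fin_cases j <;> simp [Rz, pauliZ, mul_apply, Fin.sum_univ_two]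

theorem Commute.kronecker {R m n : Type*} [CommSemiring R] [Fintype m] [Fintype n]
    {A A' : Matrix m m R} {B B' : Matrix n n R} (hA : Commute A A')
    (hB : Commute B B') : Commute (A ⊗ₖ B) (A' ⊗ₖ B') := by
  rw [Commute, SemiconjBy, ← mul_kronecker_mul, ← mul_kronecker_mul, hA.eq, hB.eq]

theorem cnot21_semiconj_pauliY_pauliX :
    SemiconjBy CNOT21 (pauliY ⊗ₖ pauliX) (pauliZ ⊗ₖ pauliY) := by
  ext ⟨i₁, i₂⟩ ⟨j₁, j₂⟩
  fin_cases i₁ <;> fin_cases i₂ <;> fin_cases j₁ <;> fin_cases j₂ <;>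
    simp [CNOT21, pauliX, pauliY, pauliZ, mul_apply, Fintype.sum_prod_type, Fin.sum_univ_two]

theorem cnot12_semiconj_pauliZ_pauliY :
    SemiconjBy CNOT12 (pauliZ ⊗ₖ pauliY) ((1 : Matrix (Fin 2) (Fin 2) ℂ) ⊗ₖ pauliY) := by
  ext ⟨i₁, i₂⟩ ⟨j₁, j₂⟩
  fin_cases i₁ <;> fin_cases i₂ <;> fin_cases j₁ <;> fin_cases j₂ <;>
    simp [CNOT12, pauliY, pauliZ, mul_apply, Fintype.sum_prod_type, Fin.sum_univ_two, one_apply]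

theorem cnot21_semiconj_one_pauliY :
    SemiconjBy CNOT21 ((1 : Matrix (Fin 2) (Fin 2) ℂ) ⊗ₖ pauliY) (pauliX ⊗ₖ pauliY) := by
  ext ⟨i₁, i₂⟩ ⟨j₁, j₂⟩
  fin_cases i₁ <;> fin_cases i₂ <;> fin_cases j₁ <;> fin_cases j₂ <;>
    simp [CNOT21, pauliX, pauliY, mul_apply, Fintype.sum_prod_type, Fin.sum_univ_two, one_apply]

theorem uc_semiconj_pauliY_pauliX (α β γ : ℝ) :
    SemiconjBy (Uc α β γ) (pauliY ⊗ₖ pauliX) (pauliX ⊗ₖ pauliY) :=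
  (((cnot21_semiconj_one_pauliY.mul_left
    ((Commute.one_left _).kronecker (ry_commute_pauliY β))).mul_left
    cnot12_semiconj_pauliZ_pauliY).mul_left
    ((rz_commute_pauliZ γ).kronecker (ry_commute_pauliY α))).mul_left
    cnot21_semiconj_pauliY_pauliX

theorem SemiconjBy.mul_mul_conjTranspose {R n : Type*} [CommSemiring R] [StarRing R] [Fintype n]
    {U V W : Matrix n n R} (h : SemiconjBy U V W) (ρ : Matrix n n R) :
    U * (V * ρ * Vᴴ) * Uᴴ = W * (U * ρ * Uᴴ) * Wᴴ := by
  have h' : Vᴴ * Uᴴ = Uᴴ * Wᴴ := by rw [← conjTranspose_mul, ← conjTranspose_mul, h.eq]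
  rw [mul_assoc, mul_assoc, h', ← mul_assoc, ← mul_assoc, ← mul_assoc, h.eq]
  simp only [mul_assoc]

theorem ptrace2_kronecker_mul_mul_kronecker (A C : Matrix (Fin 2) (Fin 2) ℂ)
    {B D : Matrix (Fin 2) (Fin 2) ℂ} (hDB : D * B = 1)
    (M : Matrix (Fin 2 × Fin 2) (Fin 2 × Fin 2) ℂ) :
    ptrace2 ((A ⊗ₖ B) * M * (C ⊗ₖ D)) = A * ptrace2 M * C := by
  have hδ (d b : Fin 2) : ∑ k, D d k * B k b = if d = b then 1 else 0 := by
    simpa [mul_apply, one_apply] using congrFun (congrFun hDB d) b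
  -- rewriting `M` through `D * B = 1` makes both sides the same sum, up to its order
  have hM (c a b : Fin 2) : M (a, b) (c, b) = ∑ d, M (a, b) (c, d) * ∑ k, D d k * B k b := by
    simp [hδ]
  ext i j
  simp only [ptrace2, mul_apply, Fintype.sum_prod_type, kroneckerMap_apply, hM]
  simp only [Fin.sum_univ_two]
  ring

theorem ptrace1_kronecker_mul_mul_kronecker (B D : Matrix (Fin 2) (Fin 2) ℂ)
    {A C : Matrix (Fin 2) (Fin 2) ℂ} (hCA : C * A = 1)
    (M : Matrix (Fin 2 × Fin 2) (Fin 2 × Fin 2) ℂ) :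
    ptrace1 ((A ⊗ₖ B) * M * (C ⊗ₖ D)) = B * ptrace1 M * D := by
  have hδ (c a : Fin 2) : ∑ k, C c k * A k a = if c = a then 1 else 0 := by
    simpa [mul_apply, one_apply] using congrFun (congrFun hCA c) a
  have hM (d a b : Fin 2) : M (a, b) (a, d) = ∑ c, M (a, b) (c, d) * ∑ k, C c k * A k a := by
    simp [hδ]
  ext i j
  simp only [ptrace1, mul_apply, Fintype.sum_prod_type, kroneckerMap_apply, hM]
  simp only [Fin.sum_univ_two]
  ring

theorem mvec_pauliX_conj (τ : Matrix (Fin 2) (Fin 2) ℂ) :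
    mvec (pauliX * τ * pauliXᴴ) = ![mvec τ 0, -mvec τ 1] := by
  rw [pauliX_conjTranspose, eta_fin_two τ]
  ext i
  fin_cases i <;> simp [mvec, pauliX, pauliY, trace_fin_two]
  ring

theorem mvec_pauliY_conj (τ : Matrix (Fin 2) (Fin 2) ℂ) :
    mvec (pauliY * τ * pauliYᴴ) = ![-mvec τ 0, mvec τ 1] := by
  rw [pauliY_conjTranspose, eta_fin_two τ]
  ext i
  fin_cases i <;> simp [mvec, pauliX, pauliY, trace_fin_two]
  ring

theorem phaseFid_pauliX_conj_pauliY_conj (τ σ : Matrix (Fin 2) (Fin 2) ℂ) :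
    phaseFid (pauliX * τ * pauliXᴴ) (pauliY * σ * pauliYᴴ) = -phaseFid τ σ := by
  simp only [phaseFid, mvec_pauliX_conj, mvec_pauliY_conj, mdot, mnorm, cons_val_zero,
    cons_val_one, cons_val_fin_one, neg_sq]
  ring

theorem uc_psf_antisymmetry_general (α β γ θ₁ θ₂ φ₁ φ₂ : ℝ) :
    PSF (dm (ψ (π - θ₁) (-φ₁ + π)) ⊗ₖ dm (ψ (π - θ₂) (-φ₂))) (Uc α β γ) =
      -PSF (dm (ψ θ₁ φ₁) ⊗ₖ dm (ψ θ₂ φ₂)) (Uc α β γ) := by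
  set ρ := dm (ψ θ₁ φ₁) ⊗ₖ dm (ψ θ₂ φ₂)
  have hρ : dm (ψ (π - θ₁) (-φ₁ + π)) ⊗ₖ dm (ψ (π - θ₂) (-φ₂)) =
      (pauliY ⊗ₖ pauliX) * ρ * (pauliY ⊗ₖ pauliX)ᴴ := by
    rw [dm_ψ_pi_sub_neg_add_pi, dm_ψ_pi_sub_neg, conjTranspose_kronecker, mul_kronecker_mul,
      mul_kronecker_mul]
  rw [PSF, PSF, hρ, (uc_semiconj_pauliY_pauliX α β γ).mul_mul_conjTranspose,
    conjTranspose_kronecker, ptrace2_kronecker_mul_mul_kronecker _ _ pauliY_conjTranspose_mul_self,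
    ptrace1_kronecker_mul_mul_kronecker _ _ pauliX_conjTranspose_mul_self,
    phaseFid_pauliX_conj_pauliY_conj]

/-- antisymmetry of the PSF of U_c under the substitution
(φ₁,φ₂,θ₁,θ₂) ↦ (−φ₁+π, −φ₂, π−θ₁, π−θ₂). -/
theorem uc_psf_antisymmetry (α β γ θ₁ θ₂ φ₁ φ₂ : ℝ)
    (h₁ : mvec (ptrace2 (Uc α β γ * (dm (ψ θ₁ φ₁) ⊗ₖ dm (ψ θ₂ φ₂)) *
        (Uc α β γ)ᴴ)) ≠ 0)
    (h₂ : mvec (ptrace1 (Uc α β γ * (dm (ψ θ₁ φ₁) ⊗ₖ dm (ψ θ₂ φ₂)) *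
        (Uc α β γ)ᴴ)) ≠ 0)
    (h₃ : mvec (ptrace2 (Uc α β γ *
        (dm (ψ (π - θ₁) (-φ₁ + π)) ⊗ₖ dm (ψ (π - θ₂) (-φ₂))) *
        (Uc α β γ)ᴴ)) ≠ 0)
    (h₄ : mvec (ptrace1 (Uc α β γ *
        (dm (ψ (π - θ₁) (-φ₁ + π)) ⊗ₖ dm (ψ (π - θ₂) (-φ₂))) *
        (Uc α β γ)ᴴ)) ≠ 0) :
    PSF (dm (ψ (π - θ₁) (-φ₁ + π)) ⊗ₖ dm (ψ (π - θ₂) (-φ₂))) (Uc α β γ) =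
      -PSF (dm (ψ θ₁ φ₁) ⊗ₖ dm (ψ θ₂ φ₂)) (Uc α β γ) :=
  uc_psf_antisymmetry_general α β γ θ₁ θ₂ φ₁ φ₂

end
end
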